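/- Let (φ, ψ, θ, P) be a classical solution of the thermodiffusive Bresse–Timoshenko system with Dirichlet boundary conditions, and define the second-order energy G(t) = (1/2) ∫₀ᴸ [ρ1 φ_tt² + (ρ1 ρ2/κ) φ_ttt² + ρ2 φ_ttx² + κ (φ_xt + ψ_t)² + α ψ_xt² + c θ_t² + r P_t² + 2 d θ_t P_t] dx. Then for every t ≥ 0, G(t) + κ ∫₀ᵗ ∫₀ᴸ θ_xt²(x,s) dx ds + h ∫₀ᵗ ∫₀ᴸ P_xt²(x,s) dx ds = G(0); in particular G is nonincreasing. -/

import Mathlib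

open Real intervalIntegral

/-- Spatial partial derivative of a function of `(x, t)`. -/
noncomputable def pdx (f : ℝ → ℝ → ℝ) : ℝ → ℝ → ℝ := fun x t => deriv (fun y => f y t) x

/-- Temporal partial derivative of a function of `(x, t)`. -/
noncomputable def pdt (f : ℝ → ℝ → ℝ) : ℝ → ℝ → ℝ := fun x t => deriv (fun s => f x s) t

/-- Classical solution of the thermodiffusive Bresse–Timoshenko system with
Dirichlet boundary conditions on `[0, L] × [0, ∞)`. -/
def IsSolution (L ρ1 ρ2 κ α ξ1 ξ2 c r h d : ℝ) (φ ψ θ P : ℝ → ℝ → ℝ) : Prop :=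
  ContDiff ℝ (⊤ : ℕ∞) (Function.uncurry φ) ∧ ContDiff ℝ (⊤ : ℕ∞) (Function.uncurry ψ) ∧
  ContDiff ℝ (⊤ : ℕ∞) (Function.uncurry θ) ∧ ContDiff ℝ (⊤ : ℕ∞) (Function.uncurry P) ∧
  (∀ x ∈ Set.Ioo (0:ℝ) L, ∀ t > (0:ℝ),
    ρ1 * pdt (pdt φ) x t - κ * pdx (fun y s => pdx φ y s + ψ y s) x t = 0 ∧
    -(ρ2 * pdx (pdt (pdt φ)) x t) - α * pdx (pdx ψ) x t + κ * (pdx φ x t + ψ x t)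
        - ξ1 * pdx θ x t - ξ2 * pdx P x t = 0 ∧
    c * pdt θ x t + d * pdt P x t - κ * pdx (pdx θ) x t - ξ1 * pdx (pdt ψ) x t = 0 ∧
    d * pdt θ x t + r * pdt P x t - h * pdx (pdx P) x t - ξ2 * pdx (pdt ψ) x t = 0) ∧
  (∀ t ≥ (0:ℝ),
    φ 0 t = 0 ∧ φ L t = 0 ∧ ψ 0 t = 0 ∧ ψ L t = 0 ∧
    θ 0 t = 0 ∧ θ L t = 0 ∧ P 0 t = 0 ∧ P L t = 0)

/-- The second-order energy functional. -/
noncomputable def energy2 (L ρ1 ρ2 κ α c r d : ℝ) (φ ψ θ P : ℝ → ℝ → ℝ) (t : ℝ) : ℝ :=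
  (1/2) * ∫ x in (0:ℝ)..L,
    (ρ1 * (pdt (pdt φ) x t) ^ 2 + (ρ1 * ρ2 / κ) * (pdt (pdt (pdt φ)) x t) ^ 2
      + ρ2 * (pdx (pdt (pdt φ)) x t) ^ 2 + κ * (pdx (pdt φ) x t + pdt ψ x t) ^ 2
      + α * (pdx (pdt ψ) x t) ^ 2 + c * (pdt θ x t) ^ 2 + r * (pdt P x t) ^ 2
      + 2 * d * (pdt θ x t) * (pdt P x t))

namespace BT

def Sm (f : ℝ → ℝ → ℝ) : Prop := ContDiff ℝ (⊤ : ℕ∞) (Function.uncurry f)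

variable {f g : ℝ → ℝ → ℝ} {x t : ℝ}

/-- slice map `y ↦ (y, t)` has derivative `(1,0)`. -/
lemma hasDerivAt_slice_x (t x : ℝ) :
    HasDerivAt (fun y : ℝ => (y, t)) ((1:ℝ), (0:ℝ)) x :=
  (hasDerivAt_id x).prodMk (hasDerivAt_const x t)

lemma hasDerivAt_slice_t (x t : ℝ) :
    HasDerivAt (fun s : ℝ => (x, s)) ((0:ℝ), (1:ℝ)) t :=
  (hasDerivAt_const t x).prodMk (hasDerivAt_id t)

lemma Sm.diff (hf : Sm f) : Differentiable ℝ (Function.uncurry f) :=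
  hf.differentiable (by simp)

lemma Sm.hasDerivAt_x (hf : Sm f) (x t : ℝ) :
    HasDerivAt (fun y => f y t) (fderiv ℝ (Function.uncurry f) (x, t) (1, 0)) x :=
  by have := ((hf.diff (x, t)).hasFDerivAt).comp_hasDerivAt x (hasDerivAt_slice_x t x); exact this

lemma Sm.hasDerivAt_t (hf : Sm f) (x t : ℝ) :
    HasDerivAt (fun s => f x s) (fderiv ℝ (Function.uncurry f) (x, t) (0, 1)) t :=
  ((hf.diff (x, t)).hasFDerivAt).comp_hasDerivAt t (hasDerivAt_slice_t x t)

lemma pdx_eq (hf : Sm f) (x t : ℝ) :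
    pdx f x t = fderiv ℝ (Function.uncurry f) (x, t) (1, 0) :=
  (hf.hasDerivAt_x x t).deriv

lemma pdt_eq (hf : Sm f) (x t : ℝ) :
    pdt f x t = fderiv ℝ (Function.uncurry f) (x, t) (0, 1) :=
  (hf.hasDerivAt_t x t).deriv

lemma Sm.hdx (hf : Sm f) (x t : ℝ) : HasDerivAt (fun y => f y t) (pdx f x t) x := by
  rw [pdx_eq hf]; exact hf.hasDerivAt_x x t

lemma Sm.hdt (hf : Sm f) (x t : ℝ) : HasDerivAt (fun s => f x s) (pdt f x t) t := by
  rw [pdt_eq hf]; exact hf.hasDerivAt_t x t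

lemma Sm.pdx (hf : Sm f) : Sm (_root_.pdx f) := by
  have h : Function.uncurry (_root_.pdx f) =
      fun p : ℝ × ℝ => fderiv ℝ (Function.uncurry f) p (1, 0) := by
    funext p
    exact pdx_eq hf p.1 p.2
  rw [Sm, h]
  exact (hf.fderiv_right (le_of_eq rfl)).clm_apply contDiff_const

lemma Sm.pdt (hf : Sm f) : Sm (_root_.pdt f) := by
  have h : Function.uncurry (_root_.pdt f) =
      fun p : ℝ × ℝ => fderiv ℝ (Function.uncurry f) p (0, 1) := by
    funext p
    exact pdt_eq hf p.1 p.2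
  rw [Sm, h]
  exact (hf.fderiv_right (le_of_eq rfl)).clm_apply contDiff_const

lemma Sm.cont (hf : Sm f) : Continuous (Function.uncurry f) := hf.continuous

lemma Sm.cont_x (hf : Sm f) (t : ℝ) : Continuous (fun y => f y t) :=
  hf.cont.comp (continuous_id.prodMk continuous_const)

lemma Sm.cont_t (hf : Sm f) (x : ℝ) : Continuous (fun s => f x s) :=
  hf.cont.comp (continuous_const.prodMk continuous_id)

/-- Clairaut / symmetry of mixed partial derivatives. -/
lemma pdt_pdx (hf : Sm f) : pdt (pdx f) = pdx (pdt f) := by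
  funext x t
  set F := Function.uncurry f with hF
  have hdF : Differentiable ℝ F := hf.diff
  have hfd : ContDiff ℝ (⊤ : ℕ∞) (fderiv ℝ F) := hf.fderiv_right (le_of_eq rfl)
  have hdfd : Differentiable ℝ (fderiv ℝ F) := hfd.differentiable (by simp)
  set F2 := fderiv ℝ (fderiv ℝ F) (x, t) with hF2
  have hsymm : ∀ v w, F2 v w = F2 w v :=
    second_derivative_symmetric (fun y => (hdF y).hasFDerivAt) ((hdfd (x, t)).hasFDerivAt)
  -- pdt (pdx f) x t = F2 (0,1) (1,0)
  have h1 : pdt (pdx f) x t = F2 (0, 1) (1, 0) := by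
    have hrw : (fun s => pdx f x s) = fun s => fderiv ℝ F (x, s) (1, 0) := by
      funext s; exact pdx_eq hf x s
    have hline : HasDerivAt (fun s => fderiv ℝ F (x, s)) (F2 (0, 1)) t :=
      ((hdfd (x, t)).hasFDerivAt).comp_hasDerivAt t (hasDerivAt_slice_t x t)
    have happ : HasDerivAt (fun s => fderiv ℝ F (x, s) (1, 0)) (F2 (0, 1) (1, 0)) t := by
      have := hline.clm_apply (hasDerivAt_const t ((1:ℝ), (0:ℝ)))
      simpa using this
    show deriv (fun s => pdx f x s) t = _
    rw [hrw]
    exact happ.deriv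
  have h2 : pdx (pdt f) x t = F2 (1, 0) (0, 1) := by
    have hrw : (fun y => pdt f y t) = fun y => fderiv ℝ F (y, t) (0, 1) := by
      funext y; exact pdt_eq hf y t
    have hline : HasDerivAt (fun y => fderiv ℝ F (y, t)) (F2 (1, 0)) x :=
      ((hdfd (x, t)).hasFDerivAt).comp_hasDerivAt x (hasDerivAt_slice_x t x)
    have happ : HasDerivAt (fun y => fderiv ℝ F (y, t) (0, 1)) (F2 (1, 0) (0, 1)) x := by
      have := hline.clm_apply (hasDerivAt_const x ((0:ℝ), (1:ℝ)))
      simpa using this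
    show deriv (fun y => pdt f y t) x = _
    rw [hrw]
    exact happ.deriv
  rw [h1, h2]
  exact hsymm (0, 1) (1, 0)

end BT

namespace BT

open Set Metric

variable {f g : ℝ → ℝ → ℝ} {x t : ℝ}

lemma pdx_add (hf : Sm f) (hg : Sm g) :
    _root_.pdx (fun y s => f y s + g y s) = fun x t => _root_.pdx f x t + _root_.pdx g x t := by
  funext x t
  exact ((hf.hdx x t).add (hg.hdx x t)).deriv

lemma zero_on_Icc {u : ℝ → ℝ} (hu : Continuous u) {a b : ℝ} (hab : a < b)
    (h : ∀ y ∈ Set.Ioo a b, u y = 0) : ∀ y ∈ Set.Icc a b, u y = 0 := by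
  have heq : Set.EqOn u (fun _ => 0) (Set.Ioo a b) := fun y hy => h y hy
  have := heq.closure hu continuous_const
  rw [closure_Ioo hab.ne] at this
  exact fun y hy => this hy

lemma zero_on_Ici {u : ℝ → ℝ} (hu : Continuous u)
    (h : ∀ y ∈ Set.Ioi (0:ℝ), u y = 0) : ∀ y ∈ Set.Ici (0:ℝ), u y = 0 := by
  have heq : Set.EqOn u (fun _ => 0) (Set.Ioi (0:ℝ)) := fun y hy => h y hy
  have := heq.closure hu continuous_const
  rw [closure_Ioi] at this
  exact fun y hy => this hy

lemma deriv_zero_on_Ioi {u : ℝ → ℝ} {m t : ℝ} (hu : HasDerivAt u m t) (ht : 0 < t)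
    (h : ∀ s ∈ Set.Ioi (0:ℝ), u s = 0) : m = 0 := by
  have hev : (fun _ : ℝ => (0:ℝ)) =ᶠ[nhds t] u := by
    filter_upwards [Ioi_mem_nhds ht] with s hs
    exact (h s hs).symm
  exact (hu.congr_of_eventuallyEq hev).unique (hasDerivAt_const t 0)

lemma bc_pdt (hf : Sm f) {x0 : ℝ} (h : ∀ t, 0 ≤ t → f x0 t = 0) :
    ∀ t, 0 ≤ t → _root_.pdt f x0 t = 0 := by
  have hIoi : ∀ t ∈ Set.Ioi (0:ℝ), _root_.pdt f x0 t = 0 := by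
    intro t ht
    exact deriv_zero_on_Ioi (hf.hdt x0 t) ht (fun s hs => h s (le_of_lt hs))
  exact fun t ht => zero_on_Ici ((hf.pdt).cont_t x0) hIoi t ht

lemma hasDerivAt_integral (hg : Sm g) (L t0 : ℝ) :
    HasDerivAt (fun t => ∫ x in (0:ℝ)..L, g x t) (∫ x in (0:ℝ)..L, _root_.pdt g x t0) t0 := by
  have hcont : Continuous (Function.uncurry (_root_.pdt g)) := (hg.pdt).cont
  obtain ⟨C, hC⟩ : ∃ C, ∀ p ∈ (Set.uIcc (0:ℝ) L) ×ˢ (Set.Icc (t0 - 1) (t0 + 1)),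
      ‖Function.uncurry (_root_.pdt g) p‖ ≤ C :=
    (isCompact_uIcc.prod isCompact_Icc).exists_bound_of_continuousOn hcont.continuousOn
  have key := intervalIntegral.hasDerivAt_integral_of_dominated_loc_of_deriv_le
    (F := fun t x => g x t) (F' := fun t x => _root_.pdt g x t) (x₀ := t0)
    (a := (0:ℝ)) (b := L) (bound := fun _ => C) (s := Metric.ball t0 1) (μ := MeasureTheory.volume) (Metric.ball_mem_nhds t0 one_pos)
    (Filter.Eventually.of_forall fun τ => ((hg.cont_x τ).aestronglyMeasurable))
    ((hg.cont_x t0).intervalIntegrable 0 L)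
    (((hg.pdt).cont_x t0).aestronglyMeasurable)
    ?_ (intervalIntegrable_const) ?_
  · exact key.2
  · refine Filter.Eventually.of_forall fun x hx τ hτ => ?_
    have hxI : x ∈ Set.uIcc (0:ℝ) L := Set.uIoc_subset_uIcc hx
    have hτI : τ ∈ Set.Icc (t0 - 1) (t0 + 1) := by
      have := abs_lt.1 (mem_ball_iff_norm.1 hτ)
      constructor <;> linarith [this.1, this.2]
    exact hC (x, τ) (Set.mk_mem_prod hxI hτI)
  · exact Filter.Eventually.of_forall fun x _ τ _ => hg.hdt x τ

lemma cont_integral (hg : Sm g) (L : ℝ) :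
    Continuous (fun t => ∫ x in (0:ℝ)..L, g x t) :=
  continuous_iff_continuousAt.2 fun t0 => (hasDerivAt_integral hg L t0).continuousAt

end BT

namespace BT

variable {f g : ℝ → ℝ → ℝ}

lemma Sm.add2 (hf : Sm f) (hg : Sm g) : Sm (fun x t => f x t + g x t) := hf.add hg
lemma Sm.mul2 (hf : Sm f) (hg : Sm g) : Sm (fun x t => f x t * g x t) := hf.mul hg
lemma Sm.pow2 (hf : Sm f) (n : ℕ) : Sm (fun x t => f x t ^ n) := hf.pow n
lemma Sm.cmul (hf : Sm f) (a : ℝ) : Sm (fun x t => a * f x t) := contDiff_const.mul hf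

end BT

namespace BT

/-- First-order energy density. -/
noncomputable def eden (ρ1 ρ2 κ α c r d : ℝ) (Φ Ψ Θ Q : ℝ → ℝ → ℝ) : ℝ → ℝ → ℝ := fun x t =>
  ρ1 * (pdt Φ x t) ^ 2 + (ρ1 * ρ2 / κ) * (pdt (pdt Φ) x t) ^ 2
    + ρ2 * (pdx (pdt Φ) x t) ^ 2 + κ * (pdx Φ x t + Ψ x t) ^ 2
    + α * (pdx Ψ x t) ^ 2 + c * (Θ x t) ^ 2 + r * (Q x t) ^ 2
    + 2 * d * (Θ x t) * (Q x t)

/-- Pointwise time derivative of the energy density. -/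
noncomputable def eden' (ρ1 ρ2 κ α c r d : ℝ) (Φ Ψ Θ Q : ℝ → ℝ → ℝ) : ℝ → ℝ → ℝ := fun x t =>
  2 * ρ1 * pdt Φ x t * pdt (pdt Φ) x t
    + 2 * (ρ1 * ρ2 / κ) * pdt (pdt Φ) x t * pdt (pdt (pdt Φ)) x t
    + 2 * ρ2 * pdx (pdt Φ) x t * pdx (pdt (pdt Φ)) x t
    + 2 * κ * (pdx Φ x t + Ψ x t) * (pdx (pdt Φ) x t + pdt Ψ x t)
    + 2 * α * pdx Ψ x t * pdx (pdt Ψ) x t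
    + 2 * c * Θ x t * pdt Θ x t + 2 * r * Q x t * pdt Q x t
    + 2 * d * (pdt Θ x t * Q x t + Θ x t * pdt Q x t)

/-- Energy flux. -/
noncomputable def flux (ρ2 κ α ξ1 ξ2 h : ℝ) (Φ Ψ Θ Q : ℝ → ℝ → ℝ) : ℝ → ℝ → ℝ := fun x t =>
  κ * pdt Φ x t * (pdx Φ x t + Ψ x t)
    + ρ2 * pdt (pdt Φ) x t * (pdx (pdt Φ) x t + pdt Ψ x t)
    + α * pdx Ψ x t * pdt Ψ x t
    + ξ1 * Θ x t * pdt Ψ x t + ξ2 * Q x t * pdt Ψ x t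
    + κ * Θ x t * pdx Θ x t + h * Q x t * pdx Q x t

/-- Pointwise spatial derivative of the flux. -/
noncomputable def flux' (ρ2 κ α ξ1 ξ2 h : ℝ) (Φ Ψ Θ Q : ℝ → ℝ → ℝ) : ℝ → ℝ → ℝ := fun x t =>
  κ * (pdx (pdt Φ) x t * (pdx Φ x t + Ψ x t) + pdt Φ x t * (pdx (pdx Φ) x t + pdx Ψ x t))
    + ρ2 * (pdx (pdt (pdt Φ)) x t * (pdx (pdt Φ) x t + pdt Ψ x t)
        + pdt (pdt Φ) x t * (pdx (pdx (pdt Φ)) x t + pdx (pdt Ψ) x t))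
    + α * (pdx (pdx Ψ) x t * pdt Ψ x t + pdx Ψ x t * pdx (pdt Ψ) x t)
    + ξ1 * (pdx Θ x t * pdt Ψ x t + Θ x t * pdx (pdt Ψ) x t)
    + ξ2 * (pdx Q x t * pdt Ψ x t + Q x t * pdx (pdt Ψ) x t)
    + κ * (pdx Θ x t * pdx Θ x t + Θ x t * pdx (pdx Θ) x t)
    + h * (pdx Q x t * pdx Q x t + Q x t * pdx (pdx Q) x t)

end BT

namespace BT

open Set

theorem aux (L ρ1 ρ2 κ α ξ1 ξ2 c r h d : ℝ) (hL : 0 < L) (hκ : κ ≠ 0)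
    (hκ0 : 0 ≤ κ) (hh0 : 0 ≤ h)
    (Φ Ψ Θ Q : ℝ → ℝ → ℝ) (hΦ : Sm Φ) (hΨ : Sm Ψ) (hΘ : Sm Θ) (hQ : Sm Q)
    (R1 : ∀ x ∈ Set.Icc (0:ℝ) L, ∀ t ∈ Set.Ici (0:ℝ),
      ρ1 * pdt (pdt Φ) x t = κ * (pdx (pdx Φ) x t + pdx Ψ x t))
    (R2 : ∀ x ∈ Set.Icc (0:ℝ) L, ∀ t ∈ Set.Ici (0:ℝ),
      ρ1 * pdt (pdt (pdt Φ)) x t = κ * (pdx (pdx (pdt Φ)) x t + pdx (pdt Ψ) x t))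
    (R3 : ∀ x ∈ Set.Icc (0:ℝ) L, ∀ t ∈ Set.Ici (0:ℝ),
      ρ2 * pdx (pdt (pdt Φ)) x t
        = -(α * pdx (pdx Ψ) x t) + κ * (pdx Φ x t + Ψ x t) - ξ1 * pdx Θ x t - ξ2 * pdx Q x t)
    (R4 : ∀ x ∈ Set.Icc (0:ℝ) L, ∀ t ∈ Set.Ici (0:ℝ),
      c * pdt Θ x t + d * pdt Q x t = κ * pdx (pdx Θ) x t + ξ1 * pdx (pdt Ψ) x t)
    (R5 : ∀ x ∈ Set.Icc (0:ℝ) L, ∀ t ∈ Set.Ici (0:ℝ),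
      d * pdt Θ x t + r * pdt Q x t = h * pdx (pdx Q) x t + ξ2 * pdx (pdt Ψ) x t)
    (B : ∀ t ∈ Set.Ici (0:ℝ), ∀ x0 ∈ ({0, L} : Set ℝ),
      pdt Φ x0 t = 0 ∧ pdt (pdt Φ) x0 t = 0 ∧ pdt Ψ x0 t = 0 ∧ Θ x0 t = 0 ∧ Q x0 t = 0) :
    (∀ t ≥ (0:ℝ),
      (1/2) * (∫ x in (0:ℝ)..L, eden ρ1 ρ2 κ α c r d Φ Ψ Θ Q x t)
        + κ * (∫ s in (0:ℝ)..t, ∫ x in (0:ℝ)..L, (pdx Θ x s) ^ 2)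
        + h * (∫ s in (0:ℝ)..t, ∫ x in (0:ℝ)..L, (pdx Q x s) ^ 2)
        = (1/2) * (∫ x in (0:ℝ)..L, eden ρ1 ρ2 κ α c r d Φ Ψ Θ Q x 0)) ∧
    (∀ s t : ℝ, 0 ≤ s → s ≤ t →
      (1/2) * (∫ x in (0:ℝ)..L, eden ρ1 ρ2 κ α c r d Φ Ψ Θ Q x t)
        ≤ (1/2) * (∫ x in (0:ℝ)..L, eden ρ1 ρ2 κ α c r d Φ Ψ Θ Q x s)) := by
  -- Smoothness of the energy density
  have hE : Sm (eden ρ1 ρ2 κ α c r d Φ Ψ Θ Q) := by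
    unfold eden
    exact ((((((((hΦ.pdt.pow2 2).cmul ρ1).add2 ((hΦ.pdt.pdt.pow2 2).cmul (ρ1 * ρ2 / κ))).add2
      ((hΦ.pdt.pdx.pow2 2).cmul ρ2)).add2 (((hΦ.pdx.add2 hΨ).pow2 2).cmul κ)).add2
      ((hΨ.pdx.pow2 2).cmul α)).add2 ((hΘ.pow2 2).cmul c)).add2 ((hQ.pow2 2).cmul r)).add2
      ((hΘ.cmul (2 * d)).mul2 hQ)
  have hEd' : Sm (eden' ρ1 ρ2 κ α c r d Φ Ψ Θ Q) := by
    unfold eden'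
    exact ((((((((hΦ.pdt.cmul (2*ρ1)).mul2 hΦ.pdt.pdt).add2
      (((hΦ.pdt.pdt.cmul (2*(ρ1*ρ2/κ))).mul2 hΦ.pdt.pdt.pdt))).add2
      ((hΦ.pdt.pdx.cmul (2*ρ2)).mul2 hΦ.pdt.pdt.pdx)).add2
      (((hΦ.pdx.add2 hΨ).cmul (2*κ)).mul2 (hΦ.pdt.pdx.add2 hΨ.pdt))).add2
      ((hΨ.pdx.cmul (2*α)).mul2 hΨ.pdt.pdx)).add2
      ((hΘ.cmul (2*c)).mul2 hΘ.pdt)).add2 ((hQ.cmul (2*r)).mul2 hQ.pdt)).add2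
      (((hΘ.pdt.mul2 hQ).add2 (hΘ.mul2 hQ.pdt)).cmul (2*d))
  have hFl' : Sm (flux' ρ2 κ α ξ1 ξ2 h Φ Ψ Θ Q) := by
    unfold flux'
    exact (((((((((hΦ.pdt.pdx.mul2 (hΦ.pdx.add2 hΨ)).add2
      (hΦ.pdt.mul2 (hΦ.pdx.pdx.add2 hΨ.pdx))).cmul κ).add2
      (((hΦ.pdt.pdt.pdx.mul2 (hΦ.pdt.pdx.add2 hΨ.pdt)).add2
        (hΦ.pdt.pdt.mul2 (hΦ.pdt.pdx.pdx.add2 hΨ.pdt.pdx))).cmul ρ2)).add2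
      (((hΨ.pdx.pdx.mul2 hΨ.pdt).add2 (hΨ.pdx.mul2 hΨ.pdt.pdx)).cmul α)).add2
      (((hΘ.pdx.mul2 hΨ.pdt).add2 (hΘ.mul2 hΨ.pdt.pdx)).cmul ξ1)).add2
      (((hQ.pdx.mul2 hΨ.pdt).add2 (hQ.mul2 hΨ.pdt.pdx)).cmul ξ2)).add2
      (((hΘ.pdx.mul2 hΘ.pdx).add2 (hΘ.mul2 hΘ.pdx.pdx)).cmul κ)).add2
      (((hQ.pdx.mul2 hQ.pdx).add2 (hQ.mul2 hQ.pdx.pdx)).cmul h))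
  -- time derivative of the energy density, pointwise
  have hED : ∀ x t : ℝ, HasDerivAt (fun s => eden ρ1 ρ2 κ α c r d Φ Ψ Θ Q x s)
      (eden' ρ1 ρ2 κ α c r d Φ Ψ Θ Q x t) t := by
    intro x t
    have hc := (((((((((hΦ.pdt.hdt x t).pow 2).const_mul ρ1).add
      (((hΦ.pdt.pdt.hdt x t).pow 2).const_mul (ρ1 * ρ2 / κ))).add
      (((hΦ.pdt.pdx.hdt x t).pow 2).const_mul ρ2)).add
      ((((hΦ.pdx.hdt x t).add (hΨ.hdt x t)).pow 2).const_mul κ)).add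
      (((hΨ.pdx.hdt x t).pow 2).const_mul α)).add
      (((hΘ.hdt x t).pow 2).const_mul c)).add
      (((hQ.hdt x t).pow 2).const_mul r)).add
      (((hΘ.hdt x t).const_mul (2 * d)).mul (hQ.hdt x t))
    simp only [eden, eden']
    refine hc.congr_deriv ?_
    rw [pdt_pdx hΦ.pdt, pdt_pdx hΦ, pdt_pdx hΨ]
    push_cast
    simp only [Pi.add_apply]
    ring
  have hpdtE : _root_.pdt (eden ρ1 ρ2 κ α c r d Φ Ψ Θ Q) = eden' ρ1 ρ2 κ α c r d Φ Ψ Θ Q := by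
    funext x t
    exact (hED x t).deriv
  -- space derivative of the flux, pointwise
  have hHD : ∀ x t : ℝ, HasDerivAt (fun y => flux ρ2 κ α ξ1 ξ2 h Φ Ψ Θ Q y t)
      (flux' ρ2 κ α ξ1 ξ2 h Φ Ψ Θ Q x t) x := by
    intro x t
    have hc := ((((((((hΦ.pdt.hdx x t).const_mul κ).mul
      ((hΦ.pdx.hdx x t).add (hΨ.hdx x t))).add
      (((hΦ.pdt.pdt.hdx x t).const_mul ρ2).mul
        ((hΦ.pdt.pdx.hdx x t).add (hΨ.pdt.hdx x t)))).add
      (((hΨ.pdx.hdx x t).const_mul α).mul (hΨ.pdt.hdx x t))).add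
      (((hΘ.hdx x t).const_mul ξ1).mul (hΨ.pdt.hdx x t))).add
      (((hQ.hdx x t).const_mul ξ2).mul (hΨ.pdt.hdx x t))).add
      (((hΘ.hdx x t).const_mul κ).mul (hΘ.pdx.hdx x t))).add
      (((hQ.hdx x t).const_mul h).mul (hQ.pdx.hdx x t))
    simp only [flux, flux']
    refine hc.congr_deriv ?_
    simp only [Pi.add_apply]
    ring
  -- pointwise dissipation identity
  have hpt : ∀ x ∈ Set.Icc (0:ℝ) L, ∀ t ∈ Set.Ici (0:ℝ),
      eden' ρ1 ρ2 κ α c r d Φ Ψ Θ Q x t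
        = 2 * flux' ρ2 κ α ξ1 ξ2 h Φ Ψ Θ Q x t
          - 2 * κ * (pdx Θ x t) ^ 2 - 2 * h * (pdx Q x t) ^ 2 := by
    intro x hx t ht
    have e1 := R1 x hx t ht
    have e2 := R2 x hx t ht
    have e3 := R3 x hx t ht
    have e4 := R4 x hx t ht
    have e5 := R5 x hx t ht
    have e2' : (ρ1 * ρ2 / κ) * pdt (pdt (pdt Φ)) x t
        = ρ2 * (pdx (pdx (pdt Φ)) x t + pdx (pdt Ψ) x t) := by
      field_simp
      linear_combination ρ2 * e2
    simp only [eden', flux']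
    linear_combination (2 * pdt Φ x t) * e1 + (2 * pdt (pdt Φ) x t) * e2'
      - (2 * pdt Ψ x t) * e3 + (2 * Θ x t) * e4 + (2 * Q x t) * e5
  -- continuity of the dissipation integrals
  have hcontD1 : Continuous (fun τ => ∫ x in (0:ℝ)..L, (pdx Θ x τ) ^ 2) :=
    cont_integral ((hΘ.pdx).pow2 2) L
  have hcontD2 : Continuous (fun τ => ∫ x in (0:ℝ)..L, (pdx Q x τ) ^ 2) :=
    cont_integral ((hQ.pdx).pow2 2) L
  set F : ℝ → ℝ := fun τ =>
    (1/2) * (∫ x in (0:ℝ)..L, eden ρ1 ρ2 κ α c r d Φ Ψ Θ Q x τ)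
      + κ * (∫ s in (0:ℝ)..τ, ∫ x in (0:ℝ)..L, (pdx Θ x s) ^ 2)
      + h * (∫ s in (0:ℝ)..τ, ∫ x in (0:ℝ)..L, (pdx Q x s) ^ 2) with hF
  have hFder : ∀ t ∈ Set.Ici (0:ℝ), HasDerivAt F 0 t := by
    intro t ht
    have h1 : HasDerivAt (fun τ => ∫ x in (0:ℝ)..L, eden ρ1 ρ2 κ α c r d Φ Ψ Θ Q x τ)
        (∫ x in (0:ℝ)..L, _root_.pdt (eden ρ1 ρ2 κ α c r d Φ Ψ Θ Q) x t) t :=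
      hasDerivAt_integral hE L t
    rw [hpdtE] at h1
    have h2 : (∫ x in (0:ℝ)..L, eden' ρ1 ρ2 κ α c r d Φ Ψ Θ Q x t)
        = (∫ x in (0:ℝ)..L, (2 * flux' ρ2 κ α ξ1 ξ2 h Φ Ψ Θ Q x t
            - 2 * κ * (pdx Θ x t) ^ 2 - 2 * h * (pdx Q x t) ^ 2)) := by
      apply intervalIntegral.integral_congr
      intro x hx
      rw [Set.uIcc_of_le hL.le] at hx
      exact hpt x hx t ht
    have hIf : IntervalIntegrable (fun x => 2 * flux' ρ2 κ α ξ1 ξ2 h Φ Ψ Θ Q x t)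
        MeasureTheory.volume 0 L := (continuous_const.mul (hFl'.cont_x t)).intervalIntegrable 0 L
    have hIθ : IntervalIntegrable (fun x => 2 * κ * (pdx Θ x t) ^ 2)
        MeasureTheory.volume 0 L :=
      (continuous_const.mul ((hΘ.pdx.pow2 2).cont_x t)).intervalIntegrable 0 L
    have hIq : IntervalIntegrable (fun x => 2 * h * (pdx Q x t) ^ 2)
        MeasureTheory.volume 0 L :=
      (continuous_const.mul ((hQ.pdx.pow2 2).cont_x t)).intervalIntegrable 0 L
    have h4 : (∫ x in (0:ℝ)..L, flux' ρ2 κ α ξ1 ξ2 h Φ Ψ Θ Q x t)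
        = flux ρ2 κ α ξ1 ξ2 h Φ Ψ Θ Q L t - flux ρ2 κ α ξ1 ξ2 h Φ Ψ Θ Q 0 t :=
      intervalIntegral.integral_eq_sub_of_hasDerivAt (fun x _ => hHD x t)
        ((hFl'.cont_x t).intervalIntegrable 0 L)
    obtain ⟨b01, b02, b03, b04, b05⟩ := B t ht 0 (Set.mem_insert _ _)
    obtain ⟨bL1, bL2, bL3, bL4, bL5⟩ := B t ht L (Set.mem_insert_iff.mpr (Or.inr rfl))
    have hfl0 : flux ρ2 κ α ξ1 ξ2 h Φ Ψ Θ Q 0 t = 0 := by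
      simp [flux, b01, b02, b03, b04, b05]
    have hflL : flux ρ2 κ α ξ1 ξ2 h Φ Ψ Θ Q L t = 0 := by
      simp [flux, bL1, bL2, bL3, bL4, bL5]
    have hval : (∫ x in (0:ℝ)..L, eden' ρ1 ρ2 κ α c r d Φ Ψ Θ Q x t)
        = -(2 * (κ * (∫ x in (0:ℝ)..L, (pdx Θ x t) ^ 2)))
          - 2 * (h * (∫ x in (0:ℝ)..L, (pdx Q x t) ^ 2)) := by
      rw [h2, intervalIntegral.integral_sub (hIf.sub hIθ) hIq,
        intervalIntegral.integral_sub hIf hIθ,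
        intervalIntegral.integral_const_mul, intervalIntegral.integral_const_mul,
        intervalIntegral.integral_const_mul, h4, hfl0, hflL]
      ring
    rw [hval] at h1
    have hI1 : HasDerivAt (fun τ => ∫ s in (0:ℝ)..τ, ∫ x in (0:ℝ)..L, (pdx Θ x s) ^ 2)
        (∫ x in (0:ℝ)..L, (pdx Θ x t) ^ 2) t :=
      (hcontD1.integral_hasStrictDerivAt 0 t).hasDerivAt
    have hI2 : HasDerivAt (fun τ => ∫ s in (0:ℝ)..τ, ∫ x in (0:ℝ)..L, (pdx Q x s) ^ 2)
        (∫ x in (0:ℝ)..L, (pdx Q x t) ^ 2) t :=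
      (hcontD2.integral_hasStrictDerivAt 0 t).hasDerivAt
    have hsum := ((h1.const_mul (1/2 : ℝ)).add (hI1.const_mul κ)).add (hI2.const_mul h)
    rw [hF]
    refine hsum.congr_deriv ?_
    ring
  have hkey : ∀ t, 0 ≤ t → F t = F 0 := by
    intro t ht
    exact constant_of_has_deriv_right_zero
      (fun u hu => ((hFder u hu.1).continuousAt.continuousWithinAt))
      (fun u hu => (hFder u hu.1).hasDerivWithinAt) t (Set.right_mem_Icc.2 ht)
  constructor
  · intro t ht
    have h0 := hkey t ht
    simp only [hF, intervalIntegral.integral_same, mul_zero, add_zero] at h0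
    exact h0
  · intro s t hs hst
    have ht0 : 0 ≤ t := hs.trans hst
    have h0s := hkey s hs
    have h0t := hkey t ht0
    simp only [hF, intervalIntegral.integral_same, mul_zero, add_zero] at h0s h0t
    have hIdiff1 : (∫ u in (0:ℝ)..t, ∫ x in (0:ℝ)..L, (pdx Θ x u) ^ 2)
        - (∫ u in (0:ℝ)..s, ∫ x in (0:ℝ)..L, (pdx Θ x u) ^ 2)
        = ∫ u in s..t, ∫ x in (0:ℝ)..L, (pdx Θ x u) ^ 2 := by
      rw [← intervalIntegral.integral_add_adjacent_intervals
        (hcontD1.intervalIntegrable 0 s) (hcontD1.intervalIntegrable s t)]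
      ring
    have hIdiff2 : (∫ u in (0:ℝ)..t, ∫ x in (0:ℝ)..L, (pdx Q x u) ^ 2)
        - (∫ u in (0:ℝ)..s, ∫ x in (0:ℝ)..L, (pdx Q x u) ^ 2)
        = ∫ u in s..t, ∫ x in (0:ℝ)..L, (pdx Q x u) ^ 2 := by
      rw [← intervalIntegral.integral_add_adjacent_intervals
        (hcontD2.intervalIntegrable 0 s) (hcontD2.intervalIntegrable s t)]
      ring
    have hpos1 : 0 ≤ ∫ u in s..t, ∫ x in (0:ℝ)..L, (pdx Θ x u) ^ 2 :=
      intervalIntegral.integral_nonneg hst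
        (fun u _ => intervalIntegral.integral_nonneg hL.le (fun x _ => sq_nonneg _))
    have hpos2 : 0 ≤ ∫ u in s..t, ∫ x in (0:ℝ)..L, (pdx Q x u) ^ 2 :=
      intervalIntegral.integral_nonneg hst
        (fun u _ => intervalIntegral.integral_nonneg hL.le (fun x _ => sq_nonneg _))
    have hk1 : 0 ≤ κ * ∫ u in s..t, ∫ x in (0:ℝ)..L, (pdx Θ x u) ^ 2 :=
      mul_nonneg hκ0 hpos1
    have hk2 : 0 ≤ h * ∫ u in s..t, ∫ x in (0:ℝ)..L, (pdx Q x u) ^ 2 :=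
      mul_nonneg hh0 hpos2
    have hd1 : κ * (∫ u in (0:ℝ)..t, ∫ x in (0:ℝ)..L, (pdx Θ x u) ^ 2)
        - κ * (∫ u in (0:ℝ)..s, ∫ x in (0:ℝ)..L, (pdx Θ x u) ^ 2)
        = κ * ∫ u in s..t, ∫ x in (0:ℝ)..L, (pdx Θ x u) ^ 2 := by
      linear_combination κ * hIdiff1
    have hd2 : h * (∫ u in (0:ℝ)..t, ∫ x in (0:ℝ)..L, (pdx Q x u) ^ 2)
        - h * (∫ u in (0:ℝ)..s, ∫ x in (0:ℝ)..L, (pdx Q x u) ^ 2)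
        = h * ∫ u in s..t, ∫ x in (0:ℝ)..L, (pdx Q x u) ^ 2 := by
      linear_combination h * hIdiff2
    linarith [h0s, h0t, hd1, hd2, hk1, hk2]

end BT

namespace BT

variable {f g : ℝ → ℝ → ℝ}

lemma Sm.sub2 (hf : Sm f) (hg : Sm g) : Sm (fun x t => f x t - g x t) := hf.sub hg
lemma Sm.neg2 (hf : Sm f) : Sm (fun x t => -(f x t)) := hf.neg

lemma extend_rel {G : ℝ → ℝ → ℝ} (hG : Sm G) {L : ℝ} (hL : 0 < L)
    (hopen : ∀ x ∈ Set.Ioo (0:ℝ) L, ∀ t > (0:ℝ), G x t = 0) :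
    ∀ x ∈ Set.Icc (0:ℝ) L, ∀ t ∈ Set.Ici (0:ℝ), G x t = 0 := by
  have step1 : ∀ x ∈ Set.Ioo (0:ℝ) L, ∀ t ∈ Set.Ici (0:ℝ), G x t = 0 := fun x hx =>
    zero_on_Ici (hG.cont_t x) (fun t ht => hopen x hx t ht)
  intro x hx t ht
  exact zero_on_Icc (hG.cont_x t) hL (fun y hy => step1 y hy t ht) x hx

end BT

/-- Dissipation identity for the second-order energy; in particular it is nonincreasing. -/
theorem second_order_energy_dissipation (L ρ1 ρ2 κ α ξ1 ξ2 c r h d : ℝ)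
    (hL : 0 < L) (hρ1 : 0 < ρ1) (hρ2 : 0 < ρ2) (hκ : 0 < κ) (hα : 0 < α)
    (hξ1 : 0 < ξ1) (hξ2 : 0 < ξ2) (hc : 0 < c) (hr : 0 < r) (hh : 0 < h)
    (hcrd : c * r - d ^ 2 > 0)
    (φ ψ θ P : ℝ → ℝ → ℝ)
    (hsol : IsSolution L ρ1 ρ2 κ α ξ1 ξ2 c r h d φ ψ θ P) :
    (∀ t ≥ (0:ℝ),
      energy2 L ρ1 ρ2 κ α c r d φ ψ θ P t
        + κ * (∫ s in (0:ℝ)..t, ∫ x in (0:ℝ)..L, (pdx (pdt θ) x s) ^ 2)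
        + h * (∫ s in (0:ℝ)..t, ∫ x in (0:ℝ)..L, (pdx (pdt P) x s) ^ 2) =
        energy2 L ρ1 ρ2 κ α c r d φ ψ θ P 0) ∧
    (∀ s t : ℝ, 0 ≤ s → s ≤ t →
      energy2 L ρ1 ρ2 κ α c r d φ ψ θ P t ≤ energy2 L ρ1 ρ2 κ α c r d φ ψ θ P s) := by
  classical
  obtain ⟨hφω, hψω, hθω, hPω, heq, hbc⟩ := hsol
  have hφ : BT.Sm φ := hφω
  have hψ : BT.Sm ψ := hψω
  have hθ : BT.Sm θ := hθω
  have hP : BT.Sm P := hPω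
  -- boundary conditions for time derivatives
  have hbφ0 : ∀ t, 0 ≤ t → pdt φ 0 t = 0 := BT.bc_pdt hφ (fun t ht => (hbc t ht).1)
  have hbφL : ∀ t, 0 ≤ t → pdt φ L t = 0 := BT.bc_pdt hφ (fun t ht => (hbc t ht).2.1)
  have hbφ0' : ∀ t, 0 ≤ t → pdt (pdt φ) 0 t = 0 := BT.bc_pdt hφ.pdt hbφ0
  have hbφL' : ∀ t, 0 ≤ t → pdt (pdt φ) L t = 0 := BT.bc_pdt hφ.pdt hbφL
  have hbφ0'' : ∀ t, 0 ≤ t → pdt (pdt (pdt φ)) 0 t = 0 := BT.bc_pdt hφ.pdt.pdt hbφ0'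
  have hbφL'' : ∀ t, 0 ≤ t → pdt (pdt (pdt φ)) L t = 0 := BT.bc_pdt hφ.pdt.pdt hbφL'
  have hbψ0 : ∀ t, 0 ≤ t → pdt ψ 0 t = 0 := BT.bc_pdt hψ (fun t ht => (hbc t ht).2.2.1)
  have hbψL : ∀ t, 0 ≤ t → pdt ψ L t = 0 := BT.bc_pdt hψ (fun t ht => (hbc t ht).2.2.2.1)
  have hbψ0' : ∀ t, 0 ≤ t → pdt (pdt ψ) 0 t = 0 := BT.bc_pdt hψ.pdt hbψ0
  have hbψL' : ∀ t, 0 ≤ t → pdt (pdt ψ) L t = 0 := BT.bc_pdt hψ.pdt hbψL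
  have hbθ0 : ∀ t, 0 ≤ t → pdt θ 0 t = 0 := BT.bc_pdt hθ (fun t ht => (hbc t ht).2.2.2.2.1)
  have hbθL : ∀ t, 0 ≤ t → pdt θ L t = 0 := BT.bc_pdt hθ (fun t ht => (hbc t ht).2.2.2.2.2.1)
  have hbP0 : ∀ t, 0 ≤ t → pdt P 0 t = 0 :=
    BT.bc_pdt hP (fun t ht => (hbc t ht).2.2.2.2.2.2.1)
  have hbPL : ∀ t, 0 ≤ t → pdt P L t = 0 :=
    BT.bc_pdt hP (fun t ht => (hbc t ht).2.2.2.2.2.2.2)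
  have B : ∀ t ∈ Set.Ici (0:ℝ), ∀ x0 ∈ ({0, L} : Set ℝ),
      pdt (pdt φ) x0 t = 0 ∧ pdt (pdt (pdt φ)) x0 t = 0 ∧ pdt (pdt ψ) x0 t = 0 ∧
        pdt θ x0 t = 0 ∧ pdt P x0 t = 0 := by
    intro t ht x0 hx0
    rcases hx0 with h0 | hLmem
    · subst h0
      exact ⟨hbφ0' t ht, hbφ0'' t ht, hbψ0' t ht, hbθ0 t ht, hbP0 t ht⟩
    · rw [Set.mem_singleton_iff] at hLmem
      subst hLmem
      exact ⟨hbφL' t ht, hbφL'' t ht, hbψL' t ht, hbθL t ht, hbPL t ht⟩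
  -- simplified first equation on the open region
  have heq1 : ∀ x ∈ Set.Ioo (0:ℝ) L, ∀ t > (0:ℝ),
      ρ1 * pdt (pdt φ) x t - κ * (pdx (pdx φ) x t + pdx ψ x t) = 0 := by
    intro x hx t ht
    have h1 := (heq x hx t ht).1
    rwa [BT.pdx_add hφ.pdx hψ] at h1
  -- canonical relation 1 on the open region (t-derivative of eq. 1)
  have R1open : ∀ x ∈ Set.Ioo (0:ℝ) L, ∀ t > (0:ℝ),
      ρ1 * pdt (pdt (pdt φ)) x t
        - κ * (pdx (pdx (pdt φ)) x t + pdx (pdt ψ) x t) = 0 := by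
    intro x hx t ht
    have hder : HasDerivAt (fun s => ρ1 * pdt (pdt φ) x s - κ * (pdx (pdx φ) x s + pdx ψ x s))
        (ρ1 * pdt (pdt (pdt φ)) x t
          - κ * (pdt (pdx (pdx φ)) x t + pdt (pdx ψ) x t)) t :=
      ((hφ.pdt.pdt.hdt x t).const_mul ρ1).sub
        (((hφ.pdx.pdx.hdt x t).add (hψ.pdx.hdt x t)).const_mul κ)
    have hz := BT.deriv_zero_on_Ioi hder ht (fun s hs => heq1 x hx s hs)
    rwa [BT.pdt_pdx hφ.pdx, BT.pdt_pdx hφ, BT.pdt_pdx hψ] at hz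
  -- canonical relation 2 on the open region (second t-derivative of eq. 1)
  have R2open : ∀ x ∈ Set.Ioo (0:ℝ) L, ∀ t > (0:ℝ),
      ρ1 * pdt (pdt (pdt (pdt φ))) x t
        - κ * (pdx (pdx (pdt (pdt φ))) x t + pdx (pdt (pdt ψ)) x t) = 0 := by
    intro x hx t ht
    have hder : HasDerivAt
        (fun s => ρ1 * pdt (pdt (pdt φ)) x s
          - κ * (pdx (pdx (pdt φ)) x s + pdx (pdt ψ) x s))
        (ρ1 * pdt (pdt (pdt (pdt φ))) x t
          - κ * (pdt (pdx (pdx (pdt φ))) x t + pdt (pdx (pdt ψ)) x t)) t :=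
      ((hφ.pdt.pdt.pdt.hdt x t).const_mul ρ1).sub
        (((hφ.pdt.pdx.pdx.hdt x t).add (hψ.pdt.pdx.hdt x t)).const_mul κ)
    have hz := BT.deriv_zero_on_Ioi hder ht (fun s hs => R1open x hx s hs)
    rwa [BT.pdt_pdx hφ.pdt.pdx, BT.pdt_pdx hφ.pdt, BT.pdt_pdx hψ.pdt] at hz
  -- canonical relation 3 on the open region (t-derivative of eq. 2)
  have R3open : ∀ x ∈ Set.Ioo (0:ℝ) L, ∀ t > (0:ℝ),
      -(ρ2 * pdx (pdt (pdt (pdt φ))) x t) - α * pdx (pdx (pdt ψ)) x t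
        + κ * (pdx (pdt φ) x t + pdt ψ x t)
        - ξ1 * pdx (pdt θ) x t - ξ2 * pdx (pdt P) x t = 0 := by
    intro x hx t ht
    have hder : HasDerivAt
        (fun s => -(ρ2 * pdx (pdt (pdt φ)) x s) - α * pdx (pdx ψ) x s
          + κ * (pdx φ x s + ψ x s) - ξ1 * pdx θ x s - ξ2 * pdx P x s)
        (-(ρ2 * pdt (pdx (pdt (pdt φ))) x t) - α * pdt (pdx (pdx ψ)) x t
          + κ * (pdt (pdx φ) x t + pdt ψ x t)
          - ξ1 * pdt (pdx θ) x t - ξ2 * pdt (pdx P) x t) t :=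
      (((((hφ.pdt.pdt.pdx.hdt x t).const_mul ρ2).neg.sub
        ((hψ.pdx.pdx.hdt x t).const_mul α)).add
        (((hφ.pdx.hdt x t).add (hψ.hdt x t)).const_mul κ)).sub
        ((hθ.pdx.hdt x t).const_mul ξ1)).sub ((hP.pdx.hdt x t).const_mul ξ2)
    have hz := BT.deriv_zero_on_Ioi hder ht (fun s hs => (heq x hx s hs).2.1)
    rwa [BT.pdt_pdx hφ.pdt.pdt, BT.pdt_pdx hψ.pdx, BT.pdt_pdx hψ, BT.pdt_pdx hφ,
      BT.pdt_pdx hθ, BT.pdt_pdx hP] at hz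
  -- canonical relation 4 on the open region (t-derivative of eq. 3)
  have R4open : ∀ x ∈ Set.Ioo (0:ℝ) L, ∀ t > (0:ℝ),
      c * pdt (pdt θ) x t + d * pdt (pdt P) x t
        - κ * pdx (pdx (pdt θ)) x t - ξ1 * pdx (pdt (pdt ψ)) x t = 0 := by
    intro x hx t ht
    have hder : HasDerivAt
        (fun s => c * pdt θ x s + d * pdt P x s
          - κ * pdx (pdx θ) x s - ξ1 * pdx (pdt ψ) x s)
        (c * pdt (pdt θ) x t + d * pdt (pdt P) x t
          - κ * pdt (pdx (pdx θ)) x t - ξ1 * pdt (pdx (pdt ψ)) x t) t :=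
      ((((hθ.pdt.hdt x t).const_mul c).add ((hP.pdt.hdt x t).const_mul d)).sub
        ((hθ.pdx.pdx.hdt x t).const_mul κ)).sub ((hψ.pdt.pdx.hdt x t).const_mul ξ1)
    have hz := BT.deriv_zero_on_Ioi hder ht (fun s hs => (heq x hx s hs).2.2.1)
    rwa [BT.pdt_pdx hθ.pdx, BT.pdt_pdx hθ, BT.pdt_pdx hψ.pdt] at hz
  -- canonical relation 5 on the open region (t-derivative of eq. 4)
  have R5open : ∀ x ∈ Set.Ioo (0:ℝ) L, ∀ t > (0:ℝ),
      d * pdt (pdt θ) x t + r * pdt (pdt P) x t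
        - h * pdx (pdx (pdt P)) x t - ξ2 * pdx (pdt (pdt ψ)) x t = 0 := by
    intro x hx t ht
    have hder : HasDerivAt
        (fun s => d * pdt θ x s + r * pdt P x s
          - h * pdx (pdx P) x s - ξ2 * pdx (pdt ψ) x s)
        (d * pdt (pdt θ) x t + r * pdt (pdt P) x t
          - h * pdt (pdx (pdx P)) x t - ξ2 * pdt (pdx (pdt ψ)) x t) t :=
      ((((hθ.pdt.hdt x t).const_mul d).add ((hP.pdt.hdt x t).const_mul r)).sub
        ((hP.pdx.pdx.hdt x t).const_mul h)).sub ((hψ.pdt.pdx.hdt x t).const_mul ξ2)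
    have hz := BT.deriv_zero_on_Ioi hder ht (fun s hs => (heq x hx s hs).2.2.2)
    rwa [BT.pdt_pdx hP.pdx, BT.pdt_pdx hP, BT.pdt_pdx hψ.pdt] at hz
  -- extend to the closed region
  have R1c := BT.extend_rel
    (G := fun x t => ρ1 * pdt (pdt (pdt φ)) x t
      - κ * (pdx (pdx (pdt φ)) x t + pdx (pdt ψ) x t))
    ((hφ.pdt.pdt.pdt.cmul ρ1).sub2 ((hφ.pdt.pdx.pdx.add2 hψ.pdt.pdx).cmul κ)) hL R1open
  have R2c := BT.extend_rel
    (G := fun x t => ρ1 * pdt (pdt (pdt (pdt φ))) x t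
      - κ * (pdx (pdx (pdt (pdt φ))) x t + pdx (pdt (pdt ψ)) x t))
    ((hφ.pdt.pdt.pdt.pdt.cmul ρ1).sub2
      ((hφ.pdt.pdt.pdx.pdx.add2 hψ.pdt.pdt.pdx).cmul κ)) hL R2open
  have R3c := BT.extend_rel
    (G := fun x t => -(ρ2 * pdx (pdt (pdt (pdt φ))) x t) - α * pdx (pdx (pdt ψ)) x t
      + κ * (pdx (pdt φ) x t + pdt ψ x t)
      - ξ1 * pdx (pdt θ) x t - ξ2 * pdx (pdt P) x t)
    (((((hφ.pdt.pdt.pdt.pdx.cmul ρ2).neg2.sub2 (hψ.pdt.pdx.pdx.cmul α)).add2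
      ((hφ.pdt.pdx.add2 hψ.pdt).cmul κ)).sub2 (hθ.pdt.pdx.cmul ξ1)).sub2
      (hP.pdt.pdx.cmul ξ2)) hL R3open
  have R4c := BT.extend_rel
    (G := fun x t => c * pdt (pdt θ) x t + d * pdt (pdt P) x t
      - κ * pdx (pdx (pdt θ)) x t - ξ1 * pdx (pdt (pdt ψ)) x t)
    ((((hθ.pdt.pdt.cmul c).add2 (hP.pdt.pdt.cmul d)).sub2
      (hθ.pdt.pdx.pdx.cmul κ)).sub2 (hψ.pdt.pdt.pdx.cmul ξ1)) hL R4open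
  have R5c := BT.extend_rel
    (G := fun x t => d * pdt (pdt θ) x t + r * pdt (pdt P) x t
      - h * pdx (pdx (pdt P)) x t - ξ2 * pdx (pdt (pdt ψ)) x t)
    ((((hθ.pdt.pdt.cmul d).add2 (hP.pdt.pdt.cmul r)).sub2
      (hP.pdt.pdx.pdx.cmul h)).sub2 (hψ.pdt.pdt.pdx.cmul ξ2)) hL R5open
  -- apply the abstract energy identity
  have A := BT.aux L ρ1 ρ2 κ α ξ1 ξ2 c r h d hL hκ.ne' hκ.le hh.le
    (pdt φ) (pdt ψ) (pdt θ) (pdt P) hφ.pdt hψ.pdt hθ.pdt hP.pdt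
    (fun x hx t ht => by have h0 := R1c x hx t ht; beta_reduce at h0; linarith)
    (fun x hx t ht => by have h0 := R2c x hx t ht; beta_reduce at h0; linarith)
    (fun x hx t ht => by have h0 := R3c x hx t ht; beta_reduce at h0; linarith)
    (fun x hx t ht => by have h0 := R4c x hx t ht; beta_reduce at h0; linarith)
    (fun x hx t ht => by have h0 := R5c x hx t ht; beta_reduce at h0; linarith)
    B
  have hEeq : ∀ t : ℝ, energy2 L ρ1 ρ2 κ α c r d φ ψ θ P t
      = (1/2) * (∫ x in (0:ℝ)..L,
          BT.eden ρ1 ρ2 κ α c r d (pdt φ) (pdt ψ) (pdt θ) (pdt P) x t) := by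
    intro t
    simp only [energy2, BT.eden]
  constructor
  · intro t ht
    rw [hEeq t, hEeq 0]
    exact A.1 t ht
  · intro s t hs hst
    rw [hEeq t, hEeq s]
    exact A.2 s t hs hst
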